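/- Let R be a commutative ring, A = ⋀_R(R^n) the exterior algebra over R on n generators θ₁,…,θₙ, N ⊆ A the augmentation ideal generated by θ₁,…,θₙ, and ωₜₒₚ = θ₁·θ₂·⋯·θₙ ∈ A the product of all generators. For any free A-module M of finite rank, the map M → M, m ↦ ωₜₒₚ • m, annihilates N·M, has image contained in M_N = {m ∈ M : a • m = 0 for all a ∈ N}, and the induced R-linear map M/(N·M) → M_N is an isomorphism. -/

import Mathlib

/-!
Write `ε : A → R` for the augmentation, so that `N = ker ε`. The top form `ω` is killed by every
vector on either side (expand the vector in the basis: a basis vector repeats a factor of `ω`),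
so `ω * x = ε x • ω = x * ω`; in particular `N` annihilates `ω` on both sides. Conversely,
contracting with the dual basis shows that an element killed by all `θᵢ` is divisible by
`θ₁ ⋯ θₙ`, and `ω` is an element of the standard `R`-basis of `A`, so `r • ω = 0` forces `r = 0`;
thus `ω * x = 0` gives `ε x = 0`. These four properties of `A` pass to `A^k` coordinatewise.
-/

section FreeModule

variable {A : Type*} [Ring A] {N : Ideal A} {ω : A} {M : Type*} [AddCommGroup M] [Module A M]

theorem smul_eq_zero_of_mem_smul_top (h : ∀ a ∈ N, ω * a = 0) {m : M}
    (hm : m ∈ N • (⊤ : Submodule A M)) : ω • m = 0 :=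
  Submodule.smul_induction_on hm (fun a ha m _ => by rw [smul_smul, h a ha, zero_smul])
    fun m m' hm hm' => by rw [smul_add, hm, hm', add_zero]

theorem exists_smul_eq_of_forall_smul_eq_zero {ι : Type*} (bM : Module.Basis ι A M)
    (h : ∀ x : A, (∀ a ∈ N, a * x = 0) → ∃ y, ω * y = x)
    {m : M} (hm : ∀ a ∈ N, a • m = 0) : ∃ m', ω • m' = m := by
  have hcoord (j : ι) : ∃ y, ω * y = bM.repr m j :=
    h _ fun a ha => by simpa using congrArg (bM.repr · j) (hm a ha)
  choose y hy using hcoord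
  refine ⟨(bM.repr m).sum fun j _ => y j • bM j, ?_⟩
  conv_rhs => rw [← bM.linearCombination_repr m, Finsupp.linearCombination_apply]
  simp only [Finsupp.smul_sum, smul_smul, hy]
  rfl

theorem mem_smul_top_of_smul_eq_zero {ι : Type*} (bM : Module.Basis ι A M)
    (h : ∀ x : A, ω * x = 0 → x ∈ N) {m : M} (hm : ω • m = 0) :
    m ∈ N • (⊤ : Submodule A M) := by
  have hcoord (j : ι) : bM.repr m j ∈ N :=
    h _ (by simpa using congrArg (bM.repr · j) hm)
  rw [← bM.linearCombination_repr m, Finsupp.linearCombination_apply]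
  exact Submodule.finsuppSum_mem _ _ _ _ fun j _ =>
    Submodule.smul_mem_smul (hcoord j) Submodule.mem_top

end FreeModule

namespace ExteriorAlgebra

variable {R V : Type*} [CommRing R] [AddCommGroup V] [Module R V]

@[simp]
theorem algebraMapInv_ι (v : V) : algebraMapInv (ι R v) = 0 := by
  simp [algebraMapInv]

theorem mul_eq_algebraMapInv_smul_of_mul_ι {x : ExteriorAlgebra R V}
    (hx : ∀ v, x * ι R v = 0) (y : ExteriorAlgebra R V) : x * y = algebraMapInv y • x := by
  induction y using ExteriorAlgebra.induction with
  | algebraMap r => simp [Algebra.smul_def, Algebra.commutes]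
  | ι v => simp [hx]
  | mul y z hy hz => rw [← mul_assoc, hy, smul_mul_assoc, hz, smul_smul, map_mul]
  | add y z hy hz => rw [mul_add, hy, hz, map_add, add_smul]

theorem mul_eq_algebraMapInv_smul_of_ι_mul {x : ExteriorAlgebra R V}
    (hx : ∀ v, ι R v * x = 0) (y : ExteriorAlgebra R V) : y * x = algebraMapInv y • x := by
  induction y using ExteriorAlgebra.induction with
  | algebraMap r => simp [Algebra.smul_def]
  | ι v => simp [hx]
  | mul y z hy hz => rw [mul_assoc, hz, mul_smul_comm, hy, smul_smul, map_mul, mul_comm]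
  | add y z hy hz => rw [add_mul, hy, hz, map_add, add_smul]

theorem sub_algebraMap_algebraMapInv_mem_span (x : ExteriorAlgebra R V) :
    x - algebraMap R _ (algebraMapInv x) ∈ Ideal.span (Set.range (ι R)) := by
  induction x using ExteriorAlgebra.induction with
  | algebraMap r => simp
  | ι v => simpa using Ideal.subset_span (Set.mem_range_self v)
  | mul x y hx hy =>
    have hxy : x * y - algebraMap R _ (algebraMapInv (x * y)) =
        x * (y - algebraMap R _ (algebraMapInv y)) +
          (x - algebraMap R _ (algebraMapInv x)) * algebraMap R _ (algebraMapInv y) := by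
      rw [map_mul, map_mul]; noncomm_ring
    rw [hxy, ← Algebra.commutes]
    exact add_mem (Ideal.mul_mem_left _ x hy) (Ideal.mul_mem_left _ _ hx)
  | add x y hx hy => simpa [add_sub_add_comm] using add_mem hx hy

theorem ker_algebraMapInv :
    RingHom.ker (algebraMapInv : ExteriorAlgebra R V →ₐ[R] R) = Ideal.span (Set.range (ι R)) := by
  refine le_antisymm (fun x hx => ?_) (Ideal.span_le.mpr ?_)
  · simpa [(RingHom.mem_ker).mp hx] using sub_algebraMap_algebraMapInv_mem_span x
  · rintro _ ⟨v, rfl⟩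
    exact algebraMapInv_ι v

theorem span_range_ι_basis {ι' : Type*} (b : Module.Basis ι' R V) :
    Ideal.span (Set.range fun i => ι R (b i)) = Ideal.span (Set.range (ι R)) := by
  refine le_antisymm (Ideal.span_mono (Set.range_comp_subset_range b (ι R)))
    (Ideal.span_le.mpr ?_)
  rintro _ ⟨v, rfl⟩
  induction b.mem_span v using Submodule.span_induction with
  | mem _ hv => obtain ⟨i, rfl⟩ := hv; exact Ideal.subset_span ⟨i, rfl⟩
  | zero => simp
  | add v w _ _ hv hw => simpa using add_mem hv hw
  | smul r v _ hv => simpa using Submodule.smul_of_tower_mem _ r hv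

theorem ι_mul_contractLeft_of_ι_mul_eq_zero (d : Module.Dual R V) {v : V}
    {x : ExteriorAlgebra R V} (hx : ι R v * x = 0) :
    ι R v * CliffordAlgebra.contractLeft d x = d v • x := by
  have h := CliffordAlgebra.contractLeft_ι_mul (Q := 0) d v x
  rw [hx, map_zero, eq_comm, sub_eq_zero] at h
  exact h.symm

theorem exists_prod_mul_eq_of_ι_mul_eq_zero {ι' : Type*} (b : Module.Basis ι' R V)
    {l : List ι'} (hl : l.Nodup) {x : ExteriorAlgebra R V} (hx : ∀ i ∈ l, ι R (b i) * x = 0) :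
    ∃ y, (l.map fun i => ι R (b i)).prod * y = x := by
  induction l generalizing x with
  | nil => exact ⟨x, by simp⟩
  | cons i l ih =>
    obtain ⟨hil, hl⟩ := List.nodup_cons.mp hl
    set x' := CliffordAlgebra.contractLeft (b.coord i) x
    have hx' : ι R (b i) * x' = x := by
      simpa using ι_mul_contractLeft_of_ι_mul_eq_zero (b.coord i) (hx i List.mem_cons_self)
    obtain ⟨y, hy⟩ := ih hl (x := x') fun j hj => by
      have hij : i ≠ j := fun h => hil (h ▸ hj)
      simpa [Finsupp.single_apply, hij] using
        ι_mul_contractLeft_of_ι_mul_eq_zero (b.coord i) (hx j (List.mem_cons_of_mem i hj))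
    exact ⟨y, by rw [List.map_cons, List.prod_cons, mul_assoc, hy, hx']⟩

variable {n : ℕ} (b : Module.Basis (Fin n) R V)

theorem exists_ιMulti_mul_eq {x : ExteriorAlgebra R V} (hx : ∀ i, ι R (b i) * x = 0) :
    ∃ y, ιMulti R n b * y = x := by
  simpa [ιMulti_apply, List.ofFn_eq_map] using
    exists_prod_mul_eq_of_ι_mul_eq_zero b (List.nodup_finRange n) fun i _ => hx i

theorem ι_mul_ιMulti (v : V) : ι R v * ιMulti R n b = 0 := by
  have : LinearMap.mulRight R (ιMulti R n b) ∘ₗ ι R = 0 :=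
    b.ext fun i => by simpa [ιMulti_apply] using ι_mul_prod_list b i
  exact LinearMap.congr_fun this v

theorem ιMulti_mul_ι (v : V) : ιMulti R n b * ι R v = 0 := by
  have : LinearMap.mulLeft R (ιMulti R n b) ∘ₗ ι R = 0 := b.ext fun i => by
    have hsnoc : ιMulti R n b * ι R (b i) = ιMulti R (n + 1) (Fin.snoc b (b i)) := by
      rw [ιMulti_apply, ιMulti_apply, List.ofFn_succ', List.prod_concat]
      simp
    have hninj : ¬ Function.Injective (Fin.snoc (α := fun _ => V) b (b i)) := fun h =>
      (Fin.castSucc_lt_last i).ne (h (by simp))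
    simpa [hsnoc] using (ιMulti R (n + 1)).map_eq_zero_of_not_injective _ hninj
  exact LinearMap.congr_fun this v

theorem ιMulti_eq_basis_univ : ιMulti R n b = b.ExteriorAlgebra Finset.univ := by
  rw [basis_apply_ofCard b (Finset.card_fin n), ιMulti_family]
  congr 1
  ext i
  simp [Set.powersetCard.ofFinEmbEquiv, Set.powersetCard.ofCard,
    ← Finset.orderEmbOfFin_unique (Finset.card_fin n) (fun _ => Finset.mem_univ _) strictMono_id]

theorem eq_zero_of_smul_ιMulti_eq_zero {r : R} (h : r • ιMulti R n b = 0) : r = 0 := by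
  rw [ιMulti_eq_basis_univ] at h
  simpa using congrArg (fun x => b.ExteriorAlgebra.repr x Finset.univ) h

end ExteriorAlgebra

open ExteriorAlgebra

theorem stmt_1 {R : Type*} [CommRing R] (n : ℕ)
    {M : Type*} [AddCommGroup M] [Module (ExteriorAlgebra R (Fin n → R)) M]
    (k : ℕ) (bM : Module.Basis (Fin k) (ExteriorAlgebra R (Fin n → R)) M)
    (N : Ideal (ExteriorAlgebra R (Fin n → R)))
    (hN : N = Ideal.span (Set.range fun i : Fin n =>
      ExteriorAlgebra.ι R (Pi.single i (1 : R))))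
    (ω : ExteriorAlgebra R (Fin n → R))
    (hω : ω = (List.ofFn fun i : Fin n => ExteriorAlgebra.ι R (Pi.single i (1 : R))).prod) :
    (∀ m ∈ N • (⊤ : Submodule (ExteriorAlgebra R (Fin n → R)) M), ω • m = 0) ∧
    (∀ m : M, ∀ a ∈ N, a • (ω • m) = 0) ∧
    (∀ m' : M, (∀ a ∈ N, a • m' = 0) → ∃ m : M, ω • m = m') ∧
    (∀ m : M, ω • m = 0 → m ∈ N • (⊤ : Submodule (ExteriorAlgebra R (Fin n → R)) M)) := by
  set b := Pi.basisFun R (Fin n)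
  have hNker : N = RingHom.ker algebraMapInv := by
    rw [hN, ker_algebraMapInv, ← span_range_ι_basis b]
    simp [b]
  have hωb : ω = ιMulti R n b := by simp [hω, ιMulti_apply, b]
  subst hNker hωb
  have hleft (x) : ιMulti R n b * x = algebraMapInv x • ιMulti R n b :=
    mul_eq_algebraMapInv_smul_of_mul_ι (ιMulti_mul_ι b) x
  have hright (x) : x * ιMulti R n b = algebraMapInv x • ιMulti R n b :=
    mul_eq_algebraMapInv_smul_of_ι_mul (ι_mul_ιMulti b) x
  refine ⟨fun m => smul_eq_zero_of_mem_smul_top fun a ha => ?_, fun m a ha => ?_,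
    fun m => exists_smul_eq_of_forall_smul_eq_zero bM fun x hx => ?_,
    fun m => mem_smul_top_of_smul_eq_zero bM fun x hx => ?_⟩
  · rw [hleft, RingHom.mem_ker.mp ha, zero_smul]
  · rw [smul_smul, hright, RingHom.mem_ker.mp ha, zero_smul, zero_smul]
  · exact exists_ιMulti_mul_eq b fun i => hx _ (algebraMapInv_ι _)
  · exact eq_zero_of_smul_ιMulti_eq_zero b (hleft x ▸ hx)
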